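/- arXiv:1511.06480 — 2 statements merged into one kernel-verified Lean document; each statement's English description precedes it below -/
import Mathlib

section
/- Let p, q ∈ ℝ^d satisfy ‖p‖₂ = 1 and ‖q‖_∞ ≤ ρ for some parameter ρ > 0, and let D = diag(σ_0, …, σ_{d−1}) where the σ_i are i.i.d. Rademacher (±1) signs. Then for any integer t with 0 < t < d and any γ > 0: Pr[ ⟨Dp, s_{→t}(Dq)⟩ > γ ] ≤ e^{−γ²/(8ρ²)}, where the probability is over D. -/
open MeasureTheory ProbabilityTheory Real
open scoped ENNReal

noncomputable section

/-- Entrywise sign: `sgn t = 1` if `t ≥ 0`, `-1` otherwise. -/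
def sgn (t : ℝ) : ℝ := if 0 ≤ t then 1 else -1

/-- Euclidean (ℓ²) norm. -/
def l2norm {ι : Type*} [Fintype ι] (x : ι → ℝ) : ℝ := Real.sqrt (∑ i, x i ^ 2)

/-- Entrywise ℓ¹ norm. -/
def l1norm {ι : Type*} [Fintype ι] (x : ι → ℝ) : ℝ := ∑ i, |x i|

/-- Supremum (ℓ∞) norm. -/
def linf {ι : Type*} [Fintype ι] (x : ι → ℝ) : ℝ := ⨆ i, |x i|

/-- Euclidean inner product. -/
def dotp {ι : Type*} [Fintype ι] (x y : ι → ℝ) : ℝ := ∑ i, x i * y i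

/-- Angle between two vectors. -/
def angle' {ι : Type*} [Fintype ι] (x y : ι → ℝ) : ℝ :=
  Real.arccos (dotp x y / (l2norm x * l2norm y))

/-- The standard Gaussian measure on `ℝ^d` (i.i.d. `N(0,1)` coordinates). -/
def gaussPi (d : ℕ) : Measure (Fin d → ℝ) := Measure.pi fun _ => gaussianReal 0 1

/-- The Rademacher measure on `ℝ`: `±1` with probability `1/2` each. -/
def radMeasure : Measure ℝ := (2 : ℝ≥0∞)⁻¹ • (Measure.dirac 1 + Measure.dirac (-1))

instance : IsProbabilityMeasure radMeasure := by
  constructor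
  simp only [radMeasure, Measure.smul_apply, Measure.coe_add, Pi.add_apply,
    Measure.dirac_apply' _ MeasurableSet.univ, Set.indicator_univ, Pi.one_apply, smul_eq_mul]
  rw [one_add_one_eq_two, ENNReal.inv_mul_cancel] <;> simp

instance (d : ℕ) : IsProbabilityMeasure (gaussPi d) := by
  unfold gaussPi; infer_instance

/-- i.i.d. Rademacher signs on `ℝ^d`. -/
def radPi (d : ℕ) : Measure (Fin d → ℝ) := Measure.pi fun _ => radMeasure

instance (d : ℕ) : IsProbabilityMeasure (radPi d) := by
  unfold radPi; infer_instance

/-- Circular shift by `t` positions: the `j`-th entry of `shift t x` is `x ((j - t) mod d)`. -/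
def shift {d : ℕ} (t : ℕ) (x : Fin d → ℝ) : Fin d → ℝ :=
  fun j => x ⟨((j : ℕ) + (d - t % d)) % d, Nat.mod_lt _ j.pos⟩

/-- The `k`-bit circulant binary embedding: `sign` of the first `k` entries of
`circ(r) · D · x`, where `D = diag D`. -/
def cbe {d k : ℕ} (hk : k ≤ d) (r D x : Fin d → ℝ) : Fin k → ℝ :=
  fun i => sgn (∑ j, r (Fin.castLE hk i - j) * (D j * x j))



/- ===== Auxiliary development ===== -/

/-- sign vector attached to a boolean vector -/
def signv {d : ℕ} (s : Fin d → Bool) : Fin d → ℝ := fun i => if s i then 1 else -1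

lemma sum_prod_bool {ι : Type*} [Fintype ι] [DecidableEq ι] (S : Finset ι) (F : ι → Bool → ℝ) :
    ∑ s : ι → Bool, ∏ j ∈ S, F j (s j)
      = 2 ^ (Fintype.card ι - S.card) * ∏ j ∈ S, (F j true + F j false) := by
  have h1 : ∀ s : ι → Bool, ∏ j ∈ S, F j (s j)
      = ∏ j : ι, (if j ∈ S then F j (s j) else 1) := by
    intro s
    rw [Finset.prod_ite_mem Finset.univ S fun j => F j (s j), Finset.univ_inter]
  simp_rw [h1]
  rw [← Fintype.prod_sum (fun (j : ι) (b : Bool) => if j ∈ S then F j b else 1)]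
  have h2 : ∀ j : ι, (∑ b : Bool, if j ∈ S then F j b else 1)
      = if j ∈ S then F j true + F j false else 2 := by
    intro j
    by_cases hj : j ∈ S <;> simp [hj, Fintype.sum_bool]
  simp_rw [h2]
  rw [Finset.prod_ite, Finset.prod_const]
  rw [Finset.filter_mem_eq_inter, Finset.univ_inter]
  rw [mul_comm]
  congr 1
  congr 1
  rw [← Finset.card_compl]
  congr 1
  ext j
  simp

lemma signv_mul {d : ℕ} (s : Fin d → Bool) (i k : Fin d) :
    signv s i * signv s k = if (s i == s k) then 1 else -1 := by
  unfold signv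
  cases h1 : s i <;> cases h2 : s k <;> norm_num

/-- Average of exp of a "matching" part of the quadratic sign chaos. -/
lemma class_mgf {d : ℕ} (σ : Equiv.Perm (Fin d)) (S : Finset (Fin d))
    (hS : ∀ j ∈ S, ∀ j' ∈ S, σ j ≠ j') (a : Fin d → ℝ) (m : ℝ) :
    ∑ s : Fin d → Bool, Real.exp (∑ j ∈ S, m * a j * (signv s j * signv s (σ j)))
      ≤ 2 ^ d * Real.exp (∑ j ∈ S, (m * a j) ^ 2 / 2) := by
  classical
  set F : Fin d → Bool → ℝ := fun j b => Real.exp (m * a j * (if b then 1 else -1)) with hF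
  have h1 : ∀ s : Fin d → Bool,
      Real.exp (∑ j ∈ S, m * a j * (signv s j * signv s (σ j)))
        = ∏ j ∈ S, F j (s j == s (σ j)) := by
    intro s
    rw [Real.exp_sum]
    refine Finset.prod_congr rfl fun j _ => ?_
    rw [signv_mul]
  simp_rw [h1]
  set Φ : (Fin d → Bool) → (Fin d → Bool) :=
    fun s k => if σ.symm k ∈ S then (s k == s (σ.symm k)) else s k with hΦdef
  have hnotS : ∀ j ∈ S, σ.symm j ∉ S := by
    intro j hj hc
    exact hS _ hc _ hj (σ.apply_symm_apply j)
  have hΦ : Function.Involutive Φ := by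
    intro s
    funext k
    by_cases hk : σ.symm k ∈ S
    · have h2 : σ.symm (σ.symm k) ∉ S := hnotS _ hk
      simp only [hΦdef, if_pos hk, if_neg h2]
      cases s k <;> cases s (σ.symm k) <;> rfl
    · simp only [hΦdef, if_neg hk]
  have h3 : ∀ s : Fin d → Bool, ∀ j ∈ S, (Φ s j == Φ s (σ j)) = s (σ j) := by
    intro s j hj
    have hjS : σ.symm j ∉ S := hnotS _ hj
    have h4 : Φ s j = s j := by simp only [hΦdef, if_neg hjS]
    have h5 : Φ s (σ j) = (s (σ j) == s j) := by
      simp only [hΦdef, σ.symm_apply_apply, if_pos hj]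
    rw [h4, h5]
    cases s j <;> cases s (σ j) <;> rfl
  have h6 : ∑ s : Fin d → Bool, ∏ j ∈ S, F j (s (σ j))
      = ∑ s : Fin d → Bool, ∏ j ∈ S, F j (s j == s (σ j)) := by
    refine Fintype.sum_equiv (Function.Involutive.toPerm Φ hΦ) _ _ fun s => ?_
    refine Finset.prod_congr rfl fun j hj => ?_
    have h35 : (Φ s j == Φ s (σ j)) = s (σ j) := h3 s j hj
    simp only [Function.Involutive.toPerm, Equiv.coe_fn_mk]
    rw [h35]
  rw [← h6]
  have h7 : ∑ s : Fin d → Bool, ∏ j ∈ S, F j (s (σ j))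
      = ∑ s : Fin d → Bool, ∏ j ∈ S, F j (s j) := by
    refine Fintype.sum_equiv (Equiv.arrowCongr σ.symm (Equiv.refl Bool)) _ _ fun s => ?_
    refine Finset.prod_congr rfl fun j hj => ?_
    simp [Equiv.arrowCongr]
  rw [h7, sum_prod_bool]
  have h8 : ∀ j ∈ S, F j true + F j false = 2 * Real.cosh (m * a j) := by
    intro j _
    simp only [hF]
    norm_num [Real.cosh_eq]
    ring
  have hcard : S.card ≤ d := by
    have := Finset.card_le_univ S
    simpa using this
  calc 2 ^ (Fintype.card (Fin d) - S.card) * ∏ j ∈ S, (F j true + F j false)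
      = 2 ^ d * ∏ j ∈ S, Real.cosh (m * a j) := by
        rw [Finset.prod_congr rfl h8, Finset.prod_mul_distrib, Finset.prod_const,
          ← mul_assoc, ← pow_add]
        congr 2
        simp only [Fintype.card_fin]
        omega
    _ ≤ 2 ^ d * ∏ j ∈ S, Real.exp ((m * a j) ^ 2 / 2) := by
        refine mul_le_mul_of_nonneg_left ?_ (by positivity)
        refine Finset.prod_le_prod (fun j _ => (Real.cosh_pos _).le) fun j _ => ?_
        exact Real.cosh_le_exp_half_sq _
    _ = 2 ^ d * Real.exp (∑ j ∈ S, (m * a j) ^ 2 / 2) := by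
        rw [Real.exp_sum]

/-- color of a cycle position -/
def colF (L : ℕ) (i : ℕ) : ℕ :=
  if i + 1 = L ∧ L % 2 = 1 then 2 else i % 2

lemma colF_lt (L i : ℕ) : colF L i < 3 := by
  unfold colF
  split_ifs with h
  · omega
  · omega

lemma colF_ne (L : ℕ) (hL : 2 ≤ L) (i : ℕ) (hi : i < L) :
    colF L ((i + 1) % L) ≠ colF L i := by
  unfold colF
  rcases eq_or_lt_of_le (Nat.succ_le_of_lt hi) with hE | hlt
  · have h0 : (i + 1) % L = 0 := by
      have : i + 1 = L := hE
      rw [this, Nat.mod_self]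
    rw [h0]
    split_ifs with h1 h2 <;> omega
  · rw [Nat.mod_eq_of_lt hlt]
    split_ifs with h1 h2 <;> omega

lemma val_unit_mul_add {L : ℕ} [NeZero L] (hL2 : 2 ≤ L) (w : (ZMod L)ˣ) (x u : ℕ)
    (hu : (w : ZMod L) = (u : ℕ)) :
    ((w⁻¹ : (ZMod L)ˣ) * ((x + u : ℕ) : ZMod L)).val
      = (((w⁻¹ : (ZMod L)ˣ) * ((x : ℕ) : ZMod L)).val + 1) % L := by
  have h1 : ((w⁻¹ : (ZMod L)ˣ) : ZMod L) * ((x + u : ℕ) : ZMod L)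
      = ((w⁻¹ : (ZMod L)ˣ) : ZMod L) * ((x : ℕ) : ZMod L) + 1 := by
    rw [Nat.cast_add, mul_add, ← hu]
    have h2 : ((w⁻¹ : (ZMod L)ˣ) : ZMod L) * ((w : (ZMod L)ˣ) : ZMod L) = 1 := by
      rw [← Units.val_mul, inv_mul_cancel, Units.val_one]
    rw [h2]
  haveI : Fact (1 < L) := ⟨by omega⟩
  rw [h1, ZMod.val_add, ZMod.val_one]

/-- position of `n` along its cycle for the map `n ↦ (n + c) % d`. -/
def cpos (c d : ℕ) (hc0 : 0 < c) : ℕ → ℕ :=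
  fun n =>
    (((ZMod.unitOfCoprime (c / Nat.gcd c d)
          (Nat.coprime_div_gcd_div_gcd (Nat.gcd_pos_of_pos_left d hc0)))⁻¹
        : (ZMod (d / Nat.gcd c d))ˣ)
      * ((n / Nat.gcd c d : ℕ) : ZMod (d / Nat.gcd c d))).val

lemma L_ge_two (c d : ℕ) (hc0 : 0 < c) (hcd : c < d) : 2 ≤ d / Nat.gcd c d := by
  have hg0 : 0 < Nat.gcd c d := Nat.gcd_pos_of_pos_left d hc0
  have hgc : Nat.gcd c d ∣ c := Nat.gcd_dvd_left c d
  have hgd : Nat.gcd c d ∣ d := Nat.gcd_dvd_right c d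
  have hgle : Nat.gcd c d ≤ c := Nat.le_of_dvd hc0 hgc
  have hdgL : d = Nat.gcd c d * (d / Nat.gcd c d) := (Nat.mul_div_cancel' hgd).symm
  by_contra h
  push_neg at h
  have hL1 : d / Nat.gcd c d ≤ 1 := by omega
  have : d ≤ Nat.gcd c d := by
    calc d = Nat.gcd c d * (d / Nat.gcd c d) := hdgL
      _ ≤ Nat.gcd c d * 1 := Nat.mul_le_mul_left _ hL1
      _ = Nat.gcd c d := mul_one _
  omega

lemma cpos_lt (c d : ℕ) (hc0 : 0 < c) (hcd : c < d) (n : ℕ) :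
    cpos c d hc0 n < d / Nat.gcd c d := by
  haveI : NeZero (d / Nat.gcd c d) := ⟨by have := L_ge_two c d hc0 hcd; omega⟩
  exact ZMod.val_lt _

lemma cpos_step (c d : ℕ) (hc0 : 0 < c) (hcd : c < d) (n : ℕ) :
    cpos c d hc0 ((n + c) % d) = (cpos c d hc0 n + 1) % (d / Nat.gcd c d) := by
  have hg0 : 0 < Nat.gcd c d := Nat.gcd_pos_of_pos_left d hc0
  have hgc : Nat.gcd c d ∣ c := Nat.gcd_dvd_left c d
  have hgd : Nat.gcd c d ∣ d := Nat.gcd_dvd_right c d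
  have hL2 : 2 ≤ d / Nat.gcd c d := L_ge_two c d hc0 hcd
  haveI : NeZero (d / Nat.gcd c d) := ⟨by omega⟩
  set G := Nat.gcd c d with hG
  obtain ⟨L, hdL⟩ : ∃ L, d = G * L := hgd
  obtain ⟨U, hcU⟩ : ∃ U, c = G * U := hgc
  have hLq : d / G = L := by rw [hdL, Nat.mul_div_cancel_left _ hg0]
  have hUq : c / G = U := by rw [hcU, Nat.mul_div_cancel_left _ hg0]
  have key : ((n + c) % d) / G = (n / G + c / G) % (d / G) := by
    rw [hLq, hUq]
    have h1 : (n + c) % d / G = (n + c) / G % L := by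
      rw [hdL]
      exact Nat.mod_mul_right_div_self (n + c) G L
    have h2 : (n + c) / G = n / G + U := by
      rw [hcU]
      exact Nat.add_mul_div_left n U hg0
    rw [h1, h2]
  have e1 : ((n + c) % d / Nat.gcd c d : ℕ)
      = (n / Nat.gcd c d + c / Nat.gcd c d) % (d / Nat.gcd c d) := key
  unfold cpos
  rw [e1, ZMod.natCast_mod]
  exact val_unit_mul_add hL2 _ _ _ (ZMod.coe_unitOfCoprime _ _)

set_option maxHeartbeats 1000000 in
lemma total_mgf {d : ℕ} (σ : Equiv.Perm (Fin d)) (col : Fin d → ℕ)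
    (hcol3 : ∀ j, col j < 3) (hcol : ∀ j, col (σ j) ≠ col j)
    (a : Fin d → ℝ) (m : ℝ) :
    ∑ s : Fin d → Bool, Real.exp (m * ∑ j, a j * (signv s j * signv s (σ j)))
      ≤ 2 ^ d * Real.exp (2 * m ^ 2 * ∑ j, a j ^ 2) := by
  classical
  set S : ℕ → Finset (Fin d) := fun k => Finset.univ.filter fun j => col j = k with hSdef
  have hSprop : ∀ k, ∀ j ∈ S k, ∀ j' ∈ S k, σ j ≠ j' := by
    intro k j hj j' hj' hc
    simp only [hSdef, Finset.mem_filter] at hj hj'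
    apply hcol j
    rw [hc, hj'.2, hj.2]
  have hmaps : ∀ j ∈ (Finset.univ : Finset (Fin d)), col j ∈ ({0, 1, 2} : Finset ℕ) := by
    intro j _
    have := hcol3 j
    simp only [Finset.mem_insert, Finset.mem_singleton]
    omega
  have hsplit : ∀ b : Fin d → ℝ,
      ∑ j, b j = (∑ j ∈ S 0, b j) + ((∑ j ∈ S 1, b j) + (∑ j ∈ S 2, b j)) := by
    intro b
    rw [← Finset.sum_fiberwise_of_maps_to hmaps b]
    rw [show ({0, 1, 2} : Finset ℕ) = insert 0 (insert 1 {2}) from rfl,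
      Finset.sum_insert (by decide), Finset.sum_insert (by decide), Finset.sum_singleton]
  set f : ℕ → (Fin d → Bool) → ℝ :=
    fun k s => Real.exp (m * ∑ j ∈ S k, a j * (signv s j * signv s (σ j))) with hfdef
  have hsummand : ∀ s : Fin d → Bool,
      Real.exp (m * ∑ j, a j * (signv s j * signv s (σ j))) = f 0 s * (f 1 s * f 2 s) := by
    intro s
    rw [hsplit fun j => a j * (signv s j * signv s (σ j))]
    rw [mul_add, mul_add, Real.exp_add, Real.exp_add]
  simp_rw [hsummand]
  have hclass : ∀ (k : ℕ) (m' : ℝ),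
      ∑ s : Fin d → Bool, Real.exp (m' * ∑ j ∈ S k, a j * (signv s j * signv s (σ j)))
        ≤ 2 ^ d * Real.exp (∑ j ∈ S k, (m' * a j) ^ 2 / 2) := by
    intro k m'
    have h := class_mgf σ (S k) (hSprop k) a m'
    have he : ∀ s : Fin d → Bool,
        (∑ j ∈ S k, m' * a j * (signv s j * signv s (σ j)))
          = m' * ∑ j ∈ S k, a j * (signv s j * signv s (σ j)) := by
      intro s
      rw [Finset.mul_sum]
      exact Finset.sum_congr rfl fun j _ => by ring
    simp_rw [he] at h
    exact h
  have hpow2 : ∀ (k : ℕ) (s : Fin d → Bool), f k s ^ 2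
      = Real.exp ((2 * m) * ∑ j ∈ S k, a j * (signv s j * signv s (σ j))) := by
    intro k s
    rw [hfdef]
    rw [← Real.exp_nat_mul]
    norm_num
    ring_nf
  have hpow4 : ∀ (k : ℕ) (s : Fin d → Bool), f k s ^ 4
      = Real.exp ((4 * m) * ∑ j ∈ S k, a j * (signv s j * signv s (σ j))) := by
    intro k s
    rw [hfdef]
    rw [← Real.exp_nat_mul]
    norm_num
    ring_nf
  have hfnonneg : ∀ k s, 0 ≤ f k s := fun k s => (Real.exp_pos _).le
  have hsumnn : ∀ (F : (Fin d → Bool) → ℝ), (∀ s, 0 ≤ F s) → 0 ≤ ∑ s : Fin d → Bool, F s :=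
    fun F hF => Finset.sum_nonneg fun s _ => hF s
  set T := ∑ s : Fin d → Bool, f 0 s * (f 1 s * f 2 s) with hT
  have hTnn : 0 ≤ T :=
    hsumnn _ fun s => mul_nonneg (hfnonneg 0 s) (mul_nonneg (hfnonneg 1 s) (hfnonneg 2 s))
  have hCS1 : T ^ 2 ≤ (∑ s : Fin d → Bool, f 0 s ^ 2) * (∑ s : Fin d → Bool, (f 1 s * f 2 s) ^ 2) :=
    Finset.sum_mul_sq_le_sq_mul_sq Finset.univ _ _
  have hCS2 : (∑ s : Fin d → Bool, (f 1 s * f 2 s) ^ 2) ^ 2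
      ≤ (∑ s : Fin d → Bool, f 1 s ^ 4) * (∑ s : Fin d → Bool, f 2 s ^ 4) := by
    have h := Finset.sum_mul_sq_le_sq_mul_sq Finset.univ (fun s => f 1 s ^ 2) (fun s => f 2 s ^ 2)
    calc (∑ s : Fin d → Bool, (f 1 s * f 2 s) ^ 2) ^ 2
        = (∑ s : Fin d → Bool, f 1 s ^ 2 * f 2 s ^ 2) ^ 2 := by
          congr 1
          exact Finset.sum_congr rfl fun s _ => by ring
      _ ≤ (∑ s : Fin d → Bool, (f 1 s ^ 2) ^ 2) * (∑ s : Fin d → Bool, (f 2 s ^ 2) ^ 2) := h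
      _ = (∑ s : Fin d → Bool, f 1 s ^ 4) * (∑ s : Fin d → Bool, f 2 s ^ 4) := by
          congr 1 <;> exact Finset.sum_congr rfl fun s _ => by ring
  have B0 : ∑ s : Fin d → Bool, f 0 s ^ 2
      ≤ 2 ^ d * Real.exp (∑ j ∈ S 0, (2 * m * a j) ^ 2 / 2) := by
    simp_rw [hpow2 0]
    exact hclass 0 (2 * m)
  have B1 : ∑ s : Fin d → Bool, f 1 s ^ 4
      ≤ 2 ^ d * Real.exp (∑ j ∈ S 1, (4 * m * a j) ^ 2 / 2) := by
    simp_rw [hpow4 1]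
    exact hclass 1 (4 * m)
  have B2 : ∑ s : Fin d → Bool, f 2 s ^ 4
      ≤ 2 ^ d * Real.exp (∑ j ∈ S 2, (4 * m * a j) ^ 2 / 2) := by
    simp_rw [hpow4 2]
    exact hclass 2 (4 * m)
  have hE : 2 * (∑ j ∈ S 0, (2 * m * a j) ^ 2 / 2) + (∑ j ∈ S 1, (4 * m * a j) ^ 2 / 2)
      + (∑ j ∈ S 2, (4 * m * a j) ^ 2 / 2) ≤ 8 * m ^ 2 * ∑ j, a j ^ 2 := by
    have e0 : 2 * (∑ j ∈ S 0, (2 * m * a j) ^ 2 / 2) = ∑ j ∈ S 0, 4 * (m ^ 2 * a j ^ 2) := by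
      rw [Finset.mul_sum]
      exact Finset.sum_congr rfl fun j _ => by ring
    have e1 : (∑ j ∈ S 1, (4 * m * a j) ^ 2 / 2) = ∑ j ∈ S 1, 8 * (m ^ 2 * a j ^ 2) :=
      Finset.sum_congr rfl fun j _ => by ring
    have e2 : (∑ j ∈ S 2, (4 * m * a j) ^ 2 / 2) = ∑ j ∈ S 2, 8 * (m ^ 2 * a j ^ 2) :=
      Finset.sum_congr rfl fun j _ => by ring
    rw [e0, e1, e2]
    calc (∑ j ∈ S 0, 4 * (m ^ 2 * a j ^ 2)) + (∑ j ∈ S 1, 8 * (m ^ 2 * a j ^ 2))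
          + (∑ j ∈ S 2, 8 * (m ^ 2 * a j ^ 2))
        ≤ (∑ j ∈ S 0, 8 * (m ^ 2 * a j ^ 2)) + (∑ j ∈ S 1, 8 * (m ^ 2 * a j ^ 2))
          + (∑ j ∈ S 2, 8 * (m ^ 2 * a j ^ 2)) := by
          gcongr with j hj
          nlinarith [sq_nonneg (m * a j)]
      _ = 8 * m ^ 2 * ∑ j, a j ^ 2 := by
          rw [add_assoc, ← hsplit fun j => 8 * (m ^ 2 * a j ^ 2), Finset.mul_sum]
          exact Finset.sum_congr rfl fun j _ => by ring
  have hT4 : T ^ 4 ≤ (2 ^ d * Real.exp (2 * m ^ 2 * ∑ j, a j ^ 2)) ^ 4 := by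
    have hstep : T ^ 4 ≤ (∑ s : Fin d → Bool, f 0 s ^ 2) ^ 2
        * ((∑ s : Fin d → Bool, f 1 s ^ 4) * (∑ s : Fin d → Bool, f 2 s ^ 4)) := by
      calc T ^ 4 = (T ^ 2) ^ 2 := by ring
        _ ≤ ((∑ s : Fin d → Bool, f 0 s ^ 2) * (∑ s : Fin d → Bool, (f 1 s * f 2 s) ^ 2)) ^ 2 := by
            apply pow_le_pow_left₀ (by positivity) hCS1
        _ = (∑ s : Fin d → Bool, f 0 s ^ 2) ^ 2
            * (∑ s : Fin d → Bool, (f 1 s * f 2 s) ^ 2) ^ 2 := by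
            ring
        _ ≤ (∑ s : Fin d → Bool, f 0 s ^ 2) ^ 2
            * ((∑ s : Fin d → Bool, f 1 s ^ 4) * (∑ s : Fin d → Bool, f 2 s ^ 4)) := by
            apply mul_le_mul_of_nonneg_left hCS2 (by positivity)
    refine hstep.trans ?_
    have hB0' : (∑ s : Fin d → Bool, f 0 s ^ 2) ^ 2
        ≤ (2 ^ d * Real.exp (∑ j ∈ S 0, (2 * m * a j) ^ 2 / 2)) ^ 2 := by
      apply pow_le_pow_left₀ (hsumnn _ fun s => sq_nonneg _) B0
    calc (∑ s : Fin d → Bool, f 0 s ^ 2) ^ 2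
        * ((∑ s : Fin d → Bool, f 1 s ^ 4) * (∑ s : Fin d → Bool, f 2 s ^ 4))
        ≤ (2 ^ d * Real.exp (∑ j ∈ S 0, (2 * m * a j) ^ 2 / 2)) ^ 2
          * ((2 ^ d * Real.exp (∑ j ∈ S 1, (4 * m * a j) ^ 2 / 2))
            * (2 ^ d * Real.exp (∑ j ∈ S 2, (4 * m * a j) ^ 2 / 2))) := by
          have h1 : 0 ≤ ∑ s : Fin d → Bool, f 1 s ^ 4 := hsumnn _ fun s => by positivity
          have h2 : 0 ≤ ∑ s : Fin d → Bool, f 2 s ^ 4 := hsumnn _ fun s => by positivity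
          exact mul_le_mul hB0' (mul_le_mul B1 B2 h2 (by positivity))
            (mul_nonneg h1 h2) (by positivity)
      _ = (2 ^ d : ℝ) ^ 4 * Real.exp (2 * (∑ j ∈ S 0, (2 * m * a j) ^ 2 / 2)
            + (∑ j ∈ S 1, (4 * m * a j) ^ 2 / 2) + (∑ j ∈ S 2, (4 * m * a j) ^ 2 / 2)) := by
          rw [Real.exp_add, Real.exp_add]
          rw [show Real.exp (2 * (∑ j ∈ S 0, (2 * m * a j) ^ 2 / 2))
            = Real.exp (∑ j ∈ S 0, (2 * m * a j) ^ 2 / 2) ^ 2 by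
              rw [← Real.exp_nat_mul]; norm_num]
          ring
      _ ≤ (2 ^ d : ℝ) ^ 4 * Real.exp (8 * m ^ 2 * ∑ j, a j ^ 2) := by
          apply mul_le_mul_of_nonneg_left (Real.exp_le_exp.mpr hE) (by positivity)
      _ = (2 ^ d * Real.exp (2 * m ^ 2 * ∑ j, a j ^ 2)) ^ 4 := by
          rw [mul_pow, ← Real.exp_nat_mul]
          norm_num
          ring_nf
  exact le_of_pow_le_pow_left₀ (by norm_num) (by positivity) hT4

lemma radPi_eq (d : ℕ) :
    radPi d = ((2 : ℝ≥0∞) ^ d)⁻¹ • ∑ s : Fin d → Bool, Measure.dirac (signv s) := by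
  classical
  unfold radPi
  refine Measure.pi_eq fun A hA => ?_
  rw [Measure.smul_apply, Measure.finset_sum_apply]
  have h1 : ∀ s : Fin d → Bool, Measure.dirac (signv s) (Set.pi Set.univ A)
      = ∏ i, (if (if s i then (1:ℝ) else -1) ∈ A i then (1 : ℝ≥0∞) else 0) := by
    intro s
    rw [Measure.dirac_apply' _ (MeasurableSet.univ_pi hA)]
    rw [Finset.prod_boole]
    by_cases h : signv s ∈ Set.pi Set.univ A
    · have hc : ∀ i ∈ Finset.univ, (if s i then (1:ℝ) else -1) ∈ A i :=
        fun i _ => h i (Set.mem_univ i)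
      rw [Set.indicator_of_mem h, Pi.one_apply, if_pos hc]
    · have hc : ¬ ∀ i ∈ Finset.univ, (if s i then (1:ℝ) else -1) ∈ A i := by
        intro hc
        exact h fun i _ => hc i (Finset.mem_univ i)
      rw [Set.indicator_of_notMem h, if_neg hc]
  simp_rw [h1]
  rw [← Fintype.prod_sum fun (i : Fin d) (b : Bool) =>
    (if (if b then (1:ℝ) else -1) ∈ A i then (1 : ℝ≥0∞) else 0)]
  have h2 : ∀ i, (∑ b : Bool, if (if b then (1:ℝ) else -1) ∈ A i then (1 : ℝ≥0∞) else 0)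
      = (if (1:ℝ) ∈ A i then (1 : ℝ≥0∞) else 0)
        + (if (-1:ℝ) ∈ A i then (1 : ℝ≥0∞) else 0) := by
    intro i
    rw [Fintype.sum_bool]
    norm_num
  simp_rw [h2]
  have h3 : ∀ i, radMeasure (A i)
      = 2⁻¹ * ((if (1:ℝ) ∈ A i then (1 : ℝ≥0∞) else 0)
        + (if (-1:ℝ) ∈ A i then (1 : ℝ≥0∞) else 0)) := by
    intro i
    unfold radMeasure
    rw [Measure.smul_apply, Measure.add_apply, Measure.dirac_apply' _ (hA i),
      Measure.dirac_apply' _ (hA i)]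
    simp [Set.indicator_apply]
  simp_rw [h3]
  rw [Finset.prod_mul_distrib, Finset.prod_const]
  simp only [smul_eq_mul, Finset.card_univ, Fintype.card_fin]
  rw [ENNReal.inv_pow]

open Classical in
lemma radPi_apply_toReal {d : ℕ} (E : Set (Fin d → ℝ)) (hE : MeasurableSet E) :
    ((radPi d) E).toReal
      = ((2 : ℝ) ^ d)⁻¹ * ∑ s : Fin d → Bool, (if signv s ∈ E then (1:ℝ) else 0) := by
  classical
  rw [radPi_eq, Measure.smul_apply, Measure.finset_sum_apply]
  have h1 : ∀ s : Fin d → Bool, Measure.dirac (signv s) E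
      = (if signv s ∈ E then (1 : ℝ≥0∞) else 0) := by
    intro s
    rw [Measure.dirac_apply' _ hE, Set.indicator_apply]
    split_ifs <;> rfl
  simp_rw [h1]
  rw [smul_eq_mul, ENNReal.toReal_mul, ENNReal.toReal_inv, ENNReal.toReal_pow,
    ENNReal.toReal_ofNat, ENNReal.toReal_sum]
  · congr 1
    refine Finset.sum_congr rfl fun s _ => ?_
    split_ifs <;> simp
  · intro s _
    split_ifs <;> simp


/-- **Tail bound for shifted sign products.** For `‖p‖₂ = 1`, `‖q‖∞ ≤ ρ`, i.i.d. Rademacher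
signs `D` and `0 < t < d`: `Pr[⟨Dp, s_{→t}(Dq)⟩ > γ] ≤ exp(−γ²/(8ρ²))`. -/
theorem stmt11 {d : ℕ} (p q : Fin d → ℝ) (hp : l2norm p = 1)
    (ρ : ℝ) (hρ : 0 < ρ) (hq : linf q ≤ ρ)
    (t : ℕ) (ht0 : 0 < t) (htd : t < d) (γ : ℝ) (hγ : 0 < γ) :
    ((radPi d) {D : Fin d → ℝ |
        γ < dotp (fun i => D i * p i) (shift t (fun i => D i * q i))}).toReal
      ≤ Real.exp (-γ ^ 2 / (8 * ρ ^ 2)) := by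
  classical
  have hd0 : 0 < d := by omega
  have hc0 : 0 < d - t := by omega
  have hcd : d - t < d := by omega
  haveI : NeZero d := ⟨by omega⟩
  set c : Fin d := ⟨d - t, hcd⟩ with hcdef
  set σ : Equiv.Perm (Fin d) := Equiv.addRight c with hσdef
  have hσapp : ∀ j : Fin d, σ j = j + c := fun j => rfl
  have hval : ∀ j : Fin d, ((j + c : Fin d) : ℕ) = ((j : ℕ) + (d - t)) % d := by
    intro j
    rw [Fin.val_add]
  have hshift : ∀ (x : Fin d → ℝ) (j : Fin d), shift t x j = x (j + c) := by
    intro x j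
    show x _ = x _
    congr 1
    rw [Fin.ext_iff, hval]
    show ((j : ℕ) + (d - t % d)) % d = _
    rw [Nat.mod_eq_of_lt htd]
  set a : Fin d → ℝ := fun j => p j * q (j + c) with hadef
  set X : (Fin d → Bool) → ℝ := fun s => ∑ j, a j * (signv s j * signv s (j + c)) with hXdef
  have hdot : ∀ s : Fin d → Bool,
      dotp (fun i => signv s i * p i) (shift t fun i => signv s i * q i) = X s := by
    intro s
    unfold dotp
    refine Finset.sum_congr rfl fun j _ => ?_
    rw [hshift]
    show (signv s j * p j) * (signv s (j + c) * q (j + c))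
      = a j * (signv s j * signv s (j + c))
    rw [hadef]
    ring
  have hmeas : MeasurableSet {D : Fin d → ℝ |
      γ < dotp (fun i => D i * p i) (shift t fun i => D i * q i)} := by
    apply measurableSet_lt measurable_const
    unfold dotp shift
    refine Finset.measurable_sum _ fun j _ => ?_
    fun_prop
  rw [radPi_apply_toReal _ hmeas]
  have hmem : ∀ s : Fin d → Bool,
      (signv s ∈ {D : Fin d → ℝ |
        γ < dotp (fun i => D i * p i) (shift t fun i => D i * q i)}) ↔ γ < X s := by
    intro s
    rw [Set.mem_setOf_eq, hdot s]
  -- the coloring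
  have hL2 : 2 ≤ d / Nat.gcd (d - t) d := L_ge_two (d - t) d hc0 hcd
  set col : Fin d → ℕ := fun j => colF (d / Nat.gcd (d - t) d) (cpos (d - t) d hc0 (j : ℕ))
    with hcoldef
  have hcol3 : ∀ j, col j < 3 := fun j => colF_lt _ _
  have hcol : ∀ j : Fin d, col (σ j) ≠ col j := by
    intro j
    rw [hσapp, hcoldef]
    show colF _ (cpos (d - t) d hc0 ((j + c : Fin d) : ℕ)) ≠ _
    rw [hval j, cpos_step (d - t) d hc0 hcd (j : ℕ)]
    exact colF_ne _ hL2 _ (cpos_lt (d - t) d hc0 hcd _)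
  set m := γ / (4 * ρ ^ 2) with hmdef
  have hm0 : 0 < m := by positivity
  have hmgf0 := total_mgf σ col hcol3 hcol a m
  have hmgf : ∑ s : Fin d → Bool, Real.exp (m * X s)
      ≤ 2 ^ d * Real.exp (2 * m ^ 2 * ∑ j, a j ^ 2) := by
    refine le_trans (le_of_eq ?_) hmgf0
    refine Finset.sum_congr rfl fun s _ => ?_
    congr 1
  -- bound on the sum of squares
  have hq' : ∀ k, |q k| ≤ ρ := by
    intro k
    refine le_trans ?_ hq
    unfold linf
    exact le_ciSup (f := fun i => |q i|) (Set.Finite.bddAbove (Set.finite_range _)) k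
  have hp2 : ∑ i, p i ^ 2 = 1 := by
    have := hp
    unfold l2norm at this
    exact Real.sqrt_eq_one.mp this
  have hA : ∑ j, a j ^ 2 ≤ ρ ^ 2 := by
    calc ∑ j, a j ^ 2 = ∑ j, p j ^ 2 * q (j + c) ^ 2 := by
          refine Finset.sum_congr rfl fun j _ => ?_
          rw [hadef]
          ring
      _ ≤ ∑ j, p j ^ 2 * ρ ^ 2 := by
          refine Finset.sum_le_sum fun j _ => ?_
          refine mul_le_mul_of_nonneg_left ?_ (sq_nonneg _)
          calc q (j + c) ^ 2 = |q (j + c)| ^ 2 := (sq_abs _).symm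
            _ ≤ ρ ^ 2 := pow_le_pow_left₀ (abs_nonneg _) (hq' _) 2
      _ = ρ ^ 2 := by rw [← Finset.sum_mul, hp2, one_mul]
  have hmgf2 : ∑ s : Fin d → Bool, Real.exp (m * X s)
      ≤ 2 ^ d * Real.exp (2 * m ^ 2 * ρ ^ 2) := by
    refine hmgf.trans ?_
    refine mul_le_mul_of_nonneg_left (Real.exp_le_exp.mpr ?_) (by positivity)
    exact mul_le_mul_of_nonneg_left hA (by positivity)
  -- Chernoff
  have hind : ∀ s : Fin d → Bool,
      (if signv s ∈ {D : Fin d → ℝ |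
        γ < dotp (fun i => D i * p i) (shift t fun i => D i * q i)} then (1:ℝ) else 0)
        ≤ Real.exp (m * (X s - γ)) := by
    intro s
    by_cases h : signv s ∈ {D : Fin d → ℝ |
        γ < dotp (fun i => D i * p i) (shift t fun i => D i * q i)}
    · rw [if_pos h]
      have hXs : γ < X s := (hmem s).mp h
      have h0 : 0 ≤ m * (X s - γ) := mul_nonneg hm0.le (by linarith)
      calc (1:ℝ) = Real.exp 0 := Real.exp_zero.symm
        _ ≤ _ := Real.exp_le_exp.mpr h0
    · rw [if_neg h]
      exact (Real.exp_pos _).le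
  have h2d : (0:ℝ) < 2 ^ d := by positivity
  calc ((2:ℝ) ^ d)⁻¹ * ∑ s : Fin d → Bool, (if signv s ∈ {D : Fin d → ℝ |
        γ < dotp (fun i => D i * p i) (shift t fun i => D i * q i)} then (1:ℝ) else 0)
      ≤ ((2:ℝ) ^ d)⁻¹ * ∑ s : Fin d → Bool, Real.exp (m * (X s - γ)) := by
        exact mul_le_mul_of_nonneg_left (Finset.sum_le_sum fun s _ => hind s) (by positivity)
    _ = ((2:ℝ) ^ d)⁻¹ * (Real.exp (-(m * γ)) * ∑ s : Fin d → Bool, Real.exp (m * X s)) := by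
        have he : ∀ s : Fin d → Bool,
            Real.exp (m * (X s - γ)) = Real.exp (-(m * γ)) * Real.exp (m * X s) := by
          intro s
          rw [← Real.exp_add]
          congr 1
          ring
        simp_rw [he]
        rw [← Finset.mul_sum]
    _ ≤ ((2:ℝ) ^ d)⁻¹ * (Real.exp (-(m * γ)) * (2 ^ d * Real.exp (2 * m ^ 2 * ρ ^ 2))) := by
        refine mul_le_mul_of_nonneg_left ?_ (by positivity)
        exact mul_le_mul_of_nonneg_left hmgf2 (Real.exp_pos _).le
    _ = Real.exp (-(m * γ) + 2 * m ^ 2 * ρ ^ 2) := by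
        rw [Real.exp_add]
        field_simp
    _ = Real.exp (-γ ^ 2 / (8 * ρ ^ 2)) := by
        congr 1
        rw [hmdef]
        field_simp
        ring


end
end

section
/- Let X_1, Y_1, …, X_k, Y_k be unit vectors in ℝ^d such that all pairwise inner products |⟨X_i, X_j⟩|, |⟨Y_i, Y_j⟩| (i ≠ j) and |⟨X_i, Y_j⟩| (i ≠ j) are at most η, and suppose the smallest singular value of the d×2k matrix B with columns X_1, Y_1, …, X_k, Y_k satisfies σ_{2k}(B) ≥ θ/2 for some θ > 0. Then for each i, the orthogonal projection of X_i onto span{X_1, Y_1, …, X_{i−1}, Y_{i−1}} has Euclidean norm at most 2η√(2k)/θ. -/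
open MeasureTheory ProbabilityTheory Real Matrix
open scoped ENNReal

noncomputable section

/-- The `d × 2k` matrix whose columns are `X 0, Y 0, X 1, Y 1, …, X (k-1), Y (k-1)`
(indexed by `Fin k × Bool`). -/
def interleave {d k : ℕ} (X Y : Fin k → Fin d → ℝ) : Matrix (Fin d) (Fin k × Bool) ℝ :=
  Matrix.of fun j c => if c.2 then Y c.1 j else X c.1 j

/-- If all pairwise inner products among the unit vectors `X_1, Y_1, …, X_k, Y_k` are at most
`η` in magnitude and the smallest singular value of the matrix `B` with these columns is at
least `θ/2`, then for each `i` the orthogonal projection of `X_i` onto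
`span{X_1, Y_1, …, X_{i−1}, Y_{i−1}}` has norm at most `2η√(2k)/θ` (equivalently, every unit
vector `w` of that span satisfies `⟨w, X_i⟩ ≤ 2η√(2k)/θ`). -/
theorem stmt17 {d k : ℕ} (X Y : Fin k → Fin d → ℝ)
    (hX : ∀ i, l2norm (X i) = 1) (hY : ∀ i, l2norm (Y i) = 1)
    (η θ : ℝ) (hθ : 0 < θ)
    (hXX : ∀ i j, i ≠ j → |dotp (X i) (X j)| ≤ η)
    (hYY : ∀ i j, i ≠ j → |dotp (Y i) (Y j)| ≤ η)
    (hXY' : ∀ i j, i ≠ j → |dotp (X i) (Y j)| ≤ η)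
    (hσ : ∀ α : Fin k × Bool → ℝ, l2norm α = 1 → θ / 2 ≤ l2norm ((interleave X Y) *ᵥ α))
    (i : Fin k) (w : Fin d → ℝ) (hw : l2norm w = 1)
    (hwspan : w ∈ Submodule.span ℝ {v : Fin d → ℝ | ∃ j, j < i ∧ (v = X j ∨ v = Y j)}) :
    dotp w (X i) ≤ 2 * η * Real.sqrt (2 * k) / θ := by
  classical
  set cols : Fin k × Bool → (Fin d → ℝ) := fun c => if c.2 then Y c.1 else X c.1 with hcolsdef
  -- Step 1: coefficients
  have key : ∀ v, v ∈ Submodule.span ℝ {v : Fin d → ℝ | ∃ j, j < i ∧ (v = X j ∨ v = Y j)} →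
      ∃ α : Fin k × Bool → ℝ, (∀ c, ¬ c.1 < i → α c = 0) ∧
      ∀ j, v j = ∑ c, α c * cols c j := by
    intro v hv
    induction hv using Submodule.span_induction with
    | mem v hv =>
        obtain ⟨j, hj, hv⟩ := hv
        rcases hv with hv | hv
        · refine ⟨fun c => if c = (j, false) then 1 else 0, ?_, ?_⟩
          · intro c hc
            simp only [ite_eq_right_iff, one_ne_zero]
            rintro rfl; exact hc hj
          · intro m
            rw [Finset.sum_eq_single (j, false)]
            · simp [hv, cols]
            · intro b _ hb; simp [hb]
            · simp
        · refine ⟨fun c => if c = (j, true) then 1 else 0, ?_, ?_⟩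
          · intro c hc
            simp only [ite_eq_right_iff, one_ne_zero]
            rintro rfl; exact hc hj
          · intro m
            rw [Finset.sum_eq_single (j, true)]
            · simp [hv, cols]
            · intro b _ hb; simp [hb]
            · simp
    | zero => exact ⟨0, fun c _ => rfl, by simp⟩
    | add x y hx hy ihx ihy =>
        obtain ⟨a, ha0, haw⟩ := ihx
        obtain ⟨b, hb0, hbw⟩ := ihy
        refine ⟨a + b, fun c hc => by simp [ha0 c hc, hb0 c hc], fun m => ?_⟩
        simp only [Pi.add_apply, haw m, hbw m, ← Finset.sum_add_distrib, add_mul]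
    | smul t x hx ihx =>
        obtain ⟨a, ha0, haw⟩ := ihx
        refine ⟨t • a, fun c hc => by simp [ha0 c hc], fun m => ?_⟩
        simp only [Pi.smul_apply, smul_eq_mul, haw m, Finset.mul_sum, mul_assoc]
  obtain ⟨α, hα0, hαw⟩ := key w hwspan
  -- α is nonzero
  have hαne : ∃ c, α c ≠ 0 := by
    by_contra h
    push_neg at h
    have : w = 0 := by
      funext m; simp [hαw m, h]
    rw [this] at hw
    simp [l2norm] at hw
  -- some index below i exists, hence η ≥ 0
  obtain ⟨c₀, hc₀⟩ := hαne
  have hc₀i : c₀.1 < i := by by_contra h; exact hc₀ (hα0 c₀ h)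
  have hη : 0 ≤ η := le_trans (abs_nonneg _) (hXX c₀.1 i (ne_of_lt hc₀i))
  -- norm of α
  set A : ℝ := l2norm α with hA
  have hAnn : 0 ≤ A := Real.sqrt_nonneg _
  have hApos : 0 < A := by
    rcases hAnn.lt_or_eq with h | h
    · exact h
    · exfalso
      have hsum : ∑ c, α c ^ 2 = 0 :=
        le_antisymm (Real.sqrt_eq_zero'.mp h.symm)
          (Finset.sum_nonneg fun c _ => sq_nonneg (α c))
      have : α c₀ ^ 2 = 0 := by
        have := Finset.sum_eq_zero_iff_of_nonneg
          (fun c (_ : c ∈ Finset.univ) => sq_nonneg (α c)) |>.mp hsum c₀ (Finset.mem_univ _)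
        exact this
      exact hc₀ (pow_eq_zero_iff (by norm_num) |>.mp this)
  -- w = B *ᵥ α
  have hwB : w = (interleave X Y) *ᵥ α := by
    funext m
    rw [hαw m]
    simp only [Matrix.mulVec, dotProduct, interleave, Matrix.of_apply, cols]
    exact Finset.sum_congr rfl fun c _ => by rcases c with ⟨c1, c2⟩ <;> cases c2 <;> simp [mul_comm]
  -- bound A ≤ 2/θ
  have hl2smul : ∀ (t : ℝ) (x : Fin d → ℝ), l2norm (t • x) = |t| * l2norm x := by
    intro t x
    simp only [l2norm, Pi.smul_apply, smul_eq_mul, mul_pow, ← Finset.mul_sum]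
    rw [Real.sqrt_mul (sq_nonneg t), Real.sqrt_sq_eq_abs]
  have hl2smul' : ∀ (t : ℝ) (x : Fin k × Bool → ℝ), l2norm (t • x) = |t| * l2norm x := by
    intro t x
    simp only [l2norm, Pi.smul_apply, smul_eq_mul, mul_pow, ← Finset.mul_sum]
    rw [Real.sqrt_mul (sq_nonneg t), Real.sqrt_sq_eq_abs]
  have hAle : A ≤ 2 / θ := by
    have h1 : l2norm (A⁻¹ • α) = 1 := by
      rw [hl2smul', abs_of_nonneg (inv_nonneg.mpr hAnn), inv_mul_cancel₀ hApos.ne']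
    have h2 := hσ (A⁻¹ • α) h1
    rw [Matrix.mulVec_smul, ← hwB, hl2smul, abs_of_nonneg (inv_nonneg.mpr hAnn), hw,
      mul_one] at h2
    have h3 : θ / 2 * A ≤ 1 := by
      calc θ / 2 * A ≤ A⁻¹ * A := mul_le_mul_of_nonneg_right h2 hAnn
        _ = 1 := inv_mul_cancel₀ hApos.ne'
    rw [le_div_iff₀ hθ]
    nlinarith
  -- the truncated dot products
  set G : Fin k × Bool → ℝ := fun c => if c.1 < i then dotp (cols c) (X i) else 0 with hG
  have hGle : ∀ c, |G c| ≤ η := by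
    intro c
    rcases c with ⟨j, b⟩
    simp only [G]
    split_ifs with h
    · cases b
      · simpa [cols] using hXX j i (ne_of_lt h)
      · have heq : dotp (Y j) (X i) = dotp (X i) (Y j) := by
          simp [dotp]; exact Finset.sum_congr rfl fun m _ => mul_comm _ _
        simp only [cols, if_true]
        rw [heq]
        exact hXY' i j (ne_of_gt h)
    · simpa using hη
  -- rewrite dotp w (X i)
  have hdot : dotp w (X i) = ∑ c, α c * G c := by
    simp only [dotp, hαw, Finset.sum_mul]
    rw [Finset.sum_comm]
    refine Finset.sum_congr rfl fun c _ => ?_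
    simp only [G]
    split_ifs with h
    · simp [dotp, Finset.mul_sum, mul_assoc]
    · simp [hα0 c h]
  -- Cauchy–Schwarz
  have hCS : ∑ c, α c * G c ≤ A * Real.sqrt (∑ c, G c ^ 2) :=
    Real.sum_mul_le_sqrt_mul_sqrt _ _ _
  have hGsum : Real.sqrt (∑ c, G c ^ 2) ≤ η * Real.sqrt (2 * k) := by
    have h1 : ∑ c, G c ^ 2 ≤ (2 * k) * η ^ 2 := by
      calc ∑ c, G c ^ 2 ≤ ∑ _c : Fin k × Bool, η ^ 2 := by
            refine Finset.sum_le_sum fun c _ => ?_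
            rw [← sq_abs]
            exact pow_le_pow_left₀ (abs_nonneg _) (hGle c) 2
        _ = (2 * k) * η ^ 2 := by
            rw [Finset.sum_const, Finset.card_univ, Fintype.card_prod, Fintype.card_fin,
              Fintype.card_bool, nsmul_eq_mul]
            push_cast; ring
    calc Real.sqrt (∑ c, G c ^ 2) ≤ Real.sqrt ((2 * k) * η ^ 2) := Real.sqrt_le_sqrt h1
      _ = η * Real.sqrt (2 * k) := by
          rw [mul_comm (2 * (k:ℝ)), Real.sqrt_mul (sq_nonneg η), Real.sqrt_sq hη]
  have hrhs : 0 ≤ η * Real.sqrt (2 * k) := mul_nonneg hη (Real.sqrt_nonneg _)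
  calc dotp w (X i) = ∑ c, α c * G c := hdot
    _ ≤ A * Real.sqrt (∑ c, G c ^ 2) := hCS
    _ ≤ A * (η * Real.sqrt (2 * k)) := by
        exact mul_le_mul_of_nonneg_left hGsum hAnn
    _ ≤ (2 / θ) * (η * Real.sqrt (2 * k)) := mul_le_mul_of_nonneg_right hAle hrhs
    _ = 2 * η * Real.sqrt (2 * k) / θ := by ring


end
end
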